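/- The volume of a hyperspherical cap of a k-dimensional ball of radius r cut at colatitude angle φ (i.e., the cap whose base has radius a = r·sin φ, with φ ≤ π/2) equals (1/2)·V_k(r)·I_{sin²φ}((k+1)/2, 1/2), where V_k(r) is the volume of the k-dimensional ball of radius r and I_x(a,b) is the regularized incomplete beta function. -/

import Mathlib

/-!
Slicing perpendicular to the first axis, the slice of the `k`-ball of radius `r` at height `x` is
a `(k-1)`-ball of radius `√(r² - x²)`, so the cap and the whole ball have volumes
`V_{k-1}(1) ∫ √(r² - x²)^(k-1) dx` over `[r cos φ, r]` and `[-r, r]` respectively.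
The substitution `t = 1 - x²/r²` turns the first integral into `r^k/2` times the incomplete beta
integral `B(sin²φ; (k+1)/2, 1/2)` and, by symmetry, the second into `r^k` times the complete one.
The common factor `r^k V_{k-1}(1)` cancels in the ratio.
-/

open Metric MeasureTheory Real

/-- The regularized incomplete beta function `I_x(a, b)`. -/
noncomputable def regIncBeta (x a b : ℝ) : ℝ :=
  (∫ t in (0:ℝ)..x, t ^ (a - 1) * (1 - t) ^ (b - 1)) /
    (∫ t in (0:ℝ)..1, t ^ (a - 1) * (1 - t) ^ (b - 1))

open Set

theorem intervalIntegrable_rpow_mul_one_sub_rpow {p q : ℝ} (hp : -1 < p) (hq : -1 < q) :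
    IntervalIntegrable (fun t : ℝ => t ^ p * (1 - t) ^ q) volume 0 1 := by
  have hc := (Complex.betaIntegral_convergent (u := p + 1) (v := q + 1)
    (by simp; linarith) (by simp; linarith)).norm
  rw [intervalIntegrable_iff_integrableOn_Ioo_of_le zero_le_one] at hc ⊢
  refine hc.congr_fun (fun t ht => ?_) measurableSet_Ioo
  have h1t : (1 : ℂ) - t = ((1 - t : ℝ) : ℂ) := by push_cast; ring
  simp only [add_sub_cancel_right, norm_mul, h1t]
  rw [Complex.norm_cpow_eq_rpow_re_of_pos ht.1,
    Complex.norm_cpow_eq_rpow_re_of_pos (sub_pos.2 ht.2)]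
  simp

theorem continuousOn_rpow_mul_one_sub_rpow (p q : ℝ) :
    ContinuousOn (fun t : ℝ => t ^ p * (1 - t) ^ q) (Ioo 0 1) := fun _ ht =>
  ((continuousAt_id.rpow_const (Or.inl ht.1.ne')).mul
    ((continuousAt_const.sub continuousAt_id).rpow_const
      (Or.inl (sub_pos.2 ht.2).ne'))).continuousWithinAt

theorem integral_rpow_mul_one_sub_rpow_pos {p q : ℝ} (hp : -1 < p) (hq : -1 < q) :
    0 < ∫ t in (0 : ℝ)..1, t ^ p * (1 - t) ^ q :=
  intervalIntegral.intervalIntegral_pos_of_pos_on (intervalIntegrable_rpow_mul_one_sub_rpow hp hq)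
    (fun _ ht => mul_pos (rpow_pos_of_pos ht.1 _) (rpow_pos_of_pos (sub_pos.2 ht.2) _))
    zero_lt_one

theorem integral_rpow_mul_one_sub_rpow_neg_half {p u : ℝ} (hp : 0 ≤ p) (hu0 : 0 ≤ u)
    (hu1 : u ≤ 1) :
    ∫ t in 0..1 - u ^ 2, t ^ p * (1 - t) ^ (-(1 / 2) : ℝ) =
      2 * ∫ x in u..1, (1 - x ^ 2) ^ p := by
  set g : ℝ → ℝ := fun t => t ^ p * (1 - t) ^ (-(1 / 2) : ℝ)
  set f : ℝ → ℝ := fun x => 1 - x ^ 2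
  have hIcc : uIcc u 1 = Icc u 1 := uIcc_of_le hu1
  have hf_Icc : MapsTo f (Icc u 1) (Icc 0 1) := fun x hx =>
    ⟨by simp only [f]; nlinarith [hx.1, hx.2], by simp only [f]; nlinarith [hx.1, hx.2]⟩
  have hf_Ioo : MapsTo f (Ioo u 1) (Ioo 0 1) := fun x hx =>
    ⟨by simp only [f]; nlinarith [hx.1, hx.2], by simp only [f]; nlinarith [hx.1, hx.2]⟩
  -- `(x ^ 2) ^ (-1/2) = x⁻¹` cancels the Jacobian `-2 x`
  have hjac : ∀ x ∈ Ioc u 1, (g ∘ f) x * (-2 * x) = -2 * (1 - x ^ 2) ^ p := by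
    intro x hx
    have hx0 : 0 < x := hu0.trans_lt hx.1
    simp only [Function.comp, g, f, sub_sub_cancel, rpow_neg (sq_nonneg x), ← sqrt_eq_rpow,
      sqrt_sq hx0.le]
    field_simp
  have hcont : Continuous fun x : ℝ => -2 * (1 - x ^ 2) ^ p := by
    have := continuous_rpow_const hp
    fun_prop
  -- `g` is unbounded near `t = 1`, i.e. `x = 0`, hence the integrable form of the substitution
  have hsubst := intervalIntegral.integral_comp_mul_deriv''' (f' := fun x => -2 * x) (g := g)
    (by fun_prop : Continuous f).continuousOn
    (fun x _ => by simpa using ((hasDerivAt_pow 2 x).const_sub 1).hasDerivWithinAt)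
    (by
      rw [min_eq_left hu1, max_eq_right hu1]
      exact (continuousOn_rpow_mul_one_sub_rpow _ _).mono hf_Ioo.image_subset)
    (by
      rw [hIcc]
      exact ((intervalIntegrable_iff_integrableOn_Icc_of_le zero_le_one).1
        (intervalIntegrable_rpow_mul_one_sub_rpow (by linarith) (by norm_num))).mono_set
          hf_Icc.image_subset)
    (by
      rw [hIcc, integrableOn_Icc_iff_integrableOn_Ioc]
      exact hcont.integrableOn_Icc.mono_set Ioc_subset_Icc_self |>.congr_fun
        (fun x hx => (hjac x hx).symm) measurableSet_Ioc)
  rw [intervalIntegral.integral_congr_ae (ae_of_all _ fun x hx => hjac x (uIoc_of_le hu1 ▸ hx)),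
    intervalIntegral.integral_const_mul] at hsubst
  simp only [f, one_pow, sub_self] at hsubst
  rw [intervalIntegral.integral_symm, ← hsubst]
  ring

theorem integral_sqrt_sq_sub_sq_pow_eq (n : ℕ) {r : ℝ} (hr : 0 < r) (u : ℝ) :
    ∫ x in r * u..r, √(r ^ 2 - x ^ 2) ^ n =
      r ^ (n + 1) * ∫ v in u..1, √(1 - v ^ 2) ^ n := by
  have hscale := intervalIntegral.integral_comp_mul_right (fun x => √(r ^ 2 - x ^ 2) ^ n)
    hr.ne' (a := u) (b := 1)
  have hpt : ∀ v : ℝ, √(r ^ 2 - (v * r) ^ 2) ^ n = r ^ n * √(1 - v ^ 2) ^ n := fun v => by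
    rw [show r ^ 2 - (v * r) ^ 2 = r ^ 2 * (1 - v ^ 2) by ring, sqrt_mul (sq_nonneg r),
      sqrt_sq hr.le, mul_pow]
  simp only [hpt, intervalIntegral.integral_const_mul, one_mul, smul_eq_mul] at hscale
  rw [mul_comm r u, show r ^ (n + 1) = r * r ^ n by ring, mul_assoc, hscale]
  field_simp

theorem integral_sqrt_sq_sub_sq_pow_eq_beta (n : ℕ) {r u : ℝ} (hr : 0 < r) (hu0 : 0 ≤ u)
    (hu1 : u ≤ 1) :
    ∫ x in r * u..r, √(r ^ 2 - x ^ 2) ^ n =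
      r ^ (n + 1) / 2 *
        ∫ t in 0..1 - u ^ 2, t ^ ((n : ℝ) / 2) * (1 - t) ^ (-(1 / 2) : ℝ) := by
  have hpow : ∀ v ∈ uIcc u 1, √(1 - v ^ 2) ^ n = (1 - v ^ 2) ^ ((n : ℝ) / 2) := by
    intro v hv
    rw [uIcc_of_le hu1] at hv
    rw [sqrt_eq_rpow, ← rpow_natCast, ← rpow_mul (by nlinarith [hv.1, hv.2])]
    ring_nf
  rw [integral_sqrt_sq_sub_sq_pow_eq n hr, intervalIntegral.integral_congr hpow,
    integral_rpow_mul_one_sub_rpow_neg_half (by positivity) hu0 hu1]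
  ring

theorem integral_neg_sqrt_sq_sub_sq_pow (n : ℕ) (r : ℝ) :
    ∫ x in -r..r, √(r ^ 2 - x ^ 2) ^ n = 2 * ∫ x in 0..r, √(r ^ 2 - x ^ 2) ^ n := by
  have hf : Continuous fun x : ℝ => √(r ^ 2 - x ^ 2) ^ n := by fun_prop
  rw [← intervalIntegral.integral_add_adjacent_intervals (b := 0) (hf.intervalIntegrable _ _)
    (hf.intervalIntegrable _ _)]
  have hreflect := intervalIntegral.integral_comp_neg (a := 0) (b := r)
    (fun x => √(r ^ 2 - x ^ 2) ^ n)
  simp only [neg_sq, neg_zero] at hreflect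
  rw [← hreflect]
  ring

theorem abs_apply_lt_of_mem_ball {ι : Type*} [Fintype ι] {y : EuclideanSpace ℝ ι} {r : ℝ}
    (hy : y ∈ ball 0 r) (i : ι) : |y i| < r :=
  (PiLp.norm_apply_le y i).trans_lt (mem_ball_zero_iff.1 hy)

theorem measurePreserving_toLp_cons (n : ℕ) :
    MeasurePreserving (fun p : ℝ × EuclideanSpace ℝ (Fin n) =>
      (WithLp.toLp 2 (Fin.cons p.1 p.2.ofLp) : EuclideanSpace ℝ (Fin (n + 1)))) := by
  convert (PiLp.volume_preserving_toLp (Fin (n + 1))).comp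
    ((volume_preserving_piFinSuccAbove (fun _ : Fin (n + 1) => ℝ) 0).symm.comp
      ((MeasurePreserving.id volume).prod (PiLp.volume_preserving_ofLp (Fin n)))) using 1
  · ext p : 1
    simp [Fin.consEquiv]
  · rfl

theorem norm_toLp_cons_lt_iff {n : ℕ} {r : ℝ} (hr : 0 ≤ r) (x : ℝ)
    (z : EuclideanSpace ℝ (Fin n)) :
    ‖(WithLp.toLp 2 (Fin.cons x z.ofLp) : EuclideanSpace ℝ (Fin (n + 1)))‖ < r ↔
      ‖z‖ < √(r ^ 2 - x ^ 2) := by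
  have hsq : ‖(WithLp.toLp 2 (Fin.cons x z.ofLp) : EuclideanSpace ℝ (Fin (n + 1)))‖ ^ 2 =
      x ^ 2 + ‖z‖ ^ 2 := by
    simp [EuclideanSpace.norm_sq_eq, Fin.sum_univ_succ]
  rw [← pow_lt_pow_iff_left₀ (norm_nonneg _) hr two_ne_zero, hsq, lt_sqrt (norm_nonneg _)]
  constructor <;> intro h <;> linarith

theorem volume_setOf_mem_ball_and_apply_zero_mem (n : ℕ) {r : ℝ} (hr : 0 ≤ r) {s : Set ℝ}
    (hs : MeasurableSet s) :
    volume {y : EuclideanSpace ℝ (Fin (n + 1)) | y ∈ ball 0 r ∧ y 0 ∈ s} =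
      ∫⁻ x in s, volume (ball (0 : EuclideanSpace ℝ (Fin n)) √(r ^ 2 - x ^ 2)) := by
  have hS : MeasurableSet {y : EuclideanSpace ℝ (Fin (n + 1)) | y ∈ ball 0 r ∧ y 0 ∈ s} :=
    measurableSet_ball.inter (hs.preimage (by fun_prop))
  have hΦ := measurePreserving_toLp_cons n
  rw [← hΦ.measure_preimage hS.nullMeasurableSet, Measure.volume_eq_prod,
    Measure.prod_apply (hΦ.measurable hS), ← lintegral_indicator hs]
  congr 1 with x
  by_cases hx : x ∈ s
  · rw [indicator_of_mem hx]
    congr 1 with z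
    simp [hx, norm_toLp_cons_lt_iff hr]
  · simp [hx]

theorem volume_cap_eq_integral (n : ℕ) {r c : ℝ} (hc : -r ≤ c) (hcr : c ≤ r) :
    volume {y : EuclideanSpace ℝ (Fin (n + 1)) | y ∈ ball 0 r ∧ c ≤ y 0} =
      ENNReal.ofReal (∫ x in c..r, √(r ^ 2 - x ^ 2) ^ n) *
        volume (ball (0 : EuclideanSpace ℝ (Fin n)) 1) := by
  have hcap : {y : EuclideanSpace ℝ (Fin (n + 1)) | y ∈ ball 0 r ∧ c ≤ y 0} =
      {y | y ∈ ball 0 r ∧ y 0 ∈ Icc c r} := by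
    ext y
    simp only [mem_ofPred_eq, mem_Icc, and_congr_right_iff, iff_self_and]
    exact fun hy _ => (abs_lt.1 (abs_apply_lt_of_mem_ball hy 0)).2.le
  have hf : Continuous fun x : ℝ => √(r ^ 2 - x ^ 2) ^ n := by fun_prop
  rw [hcap, volume_setOf_mem_ball_and_apply_zero_mem n (by linarith) measurableSet_Icc,
    setLIntegral_congr Ioo_ae_eq_Icc.symm,
    setLIntegral_congr_fun measurableSet_Ioo fun x hx =>
      Measure.addHaar_ball_of_pos _ _ (sqrt_pos.2 (by nlinarith [hx.1, hx.2])),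
    finrank_euclideanSpace_fin, lintegral_mul_const _ (by fun_prop),
    ← ofReal_integral_eq_lintegral_ofReal (hf.integrableOn_Icc.mono_set Ioo_subset_Icc_self)
      (ae_of_all _ fun x => by positivity),
    intervalIntegral.integral_of_le hcr, integral_Ioc_eq_integral_Ioo]

theorem volume_ball_eq_integral (n : ℕ) {r : ℝ} (hr : 0 ≤ r) :
    volume (ball (0 : EuclideanSpace ℝ (Fin (n + 1))) r) =
      ENNReal.ofReal (∫ x in -r..r, √(r ^ 2 - x ^ 2) ^ n) *
        volume (ball (0 : EuclideanSpace ℝ (Fin n)) 1) := by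
  rw [← volume_cap_eq_integral n le_rfl (by linarith)]
  congr 1 with y
  simp only [mem_ofPred_eq, iff_self_and]
  exact fun hy => (abs_lt.1 (abs_apply_lt_of_mem_ball hy 0)).1.le

/-- The volume of the hyperspherical cap of the `k`-dimensional
ball of radius `r` cut at colatitude angle `φ ≤ π/2` equals
`(1/2) ⬝ V_k(r) ⬝ I_{sin²φ}((k+1)/2, 1/2)`. -/
theorem stmt_7 (k : ℕ) (hk : 0 < k) (r φ : ℝ) (hr : 0 < r)
    (hφ0 : 0 ≤ φ) (hφ : φ ≤ π / 2) :
    (volume {y : EuclideanSpace ℝ (Fin k) |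
        y ∈ ball (0 : EuclideanSpace ℝ (Fin k)) r ∧
        r * Real.cos φ ≤ y ⟨0, hk⟩}).toReal =
      1 / 2 * (volume (ball (0 : EuclideanSpace ℝ (Fin k)) r)).toReal *
        regIncBeta (Real.sin φ ^ 2) ((k + 1) / 2) (1 / 2) := by
  obtain ⟨n, rfl⟩ : ∃ n, k = n + 1 := ⟨k - 1, by omega⟩
  have hcos0 : 0 ≤ cos φ := cos_nonneg_of_mem_Icc ⟨by linarith [pi_pos], hφ⟩
  have hcos1 : cos φ ≤ 1 := cos_le_one φ
  have hf0 : ∀ x, 0 ≤ √(r ^ 2 - x ^ 2) ^ n := fun x => by positivity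
  have hhalf := integral_sqrt_sq_sub_sq_pow_eq_beta n hr le_rfl zero_le_one
  rw [mul_zero, zero_pow two_ne_zero, sub_zero] at hhalf
  have hB := integral_rpow_mul_one_sub_rpow_pos
    (neg_one_lt_zero.trans_le (by positivity : (0 : ℝ) ≤ n / 2))
    (by norm_num : (-1 : ℝ) < -(1 / 2))
  rw [show (⟨0, hk⟩ : Fin (n + 1)) = 0 from rfl,
    volume_cap_eq_integral n (by nlinarith) (by nlinarith), volume_ball_eq_integral n hr.le,
    ENNReal.toReal_mul, ENNReal.toReal_mul,
    ENNReal.toReal_ofReal (intervalIntegral.integral_nonneg (by nlinarith) fun x _ => hf0 x),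
    ENNReal.toReal_ofReal (intervalIntegral.integral_nonneg (by linarith) fun x _ => hf0 x),
    integral_sqrt_sq_sub_sq_pow_eq_beta n hr hcos0 hcos1, ← sin_sq,
    integral_neg_sqrt_sq_sub_sq_pow, hhalf, regIncBeta,
    show ((↑(n + 1) : ℝ) + 1) / 2 - 1 = n / 2 by push_cast; ring,
    show (1 : ℝ) / 2 - 1 = -(1 / 2) by norm_num]
  field_simp
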